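/- Sufficient condition for integrability of a map arising from a pair of tropical elliptic pencils: let α₀₁, α₀₂, α₁₀, α₁₂, α₂₀, α₂₁, α₂₂ be real parameters and define F₁(y) = max(α₂₀+2y, α₂₁+y, α₂₂), F₃(y) = max(α₀₁+y, α₀₂), G₁(y) = max(α₀₂+2y, α₁₂+y, α₂₂), G₃(y) = max(α₁₀+y, α₂₀), and A(x,y) = max(α₀₁+y+2x, α₀₂+2x, α₁₀+2y+x, α₁₂+x, α₂₀+2y, α₂₁+y, α₂₂). Suppose that for all (x,y) ∈ ℝ² with A(x,y) > A(y,x) the condition F₁(y) + G₃(y) = G₁(y) + F₃(y) holds. Then the map defined by x̄ = F₁(y) − F₃(y) − x, ȳ = F₁(x̄) − F₃(x̄) − y preserves the invariant I(x,y) := min(A(x,y), A(y,x)) − x − y; more precisely, for every (x,y) ∈ ℝ², I(x̄, y) = I(x,y) and I(x̄, ȳ) = I(x,y), so that each level set U_κ = {(x,y) : κ + x + y = min(A(x,y), A(y,x))} is invariant. -/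

import Mathlib

/-!
As a function of `x`, `A(x,y) = max(F₃(y) + 2x, (α₁₀ + 2y) ⊔ α₁₂ + x, F₁(y))` is a tropical
quadratic, and the tropical Vieta involution `x ↦ F₁(y) − F₃(y) − x` preserves `A(x,y) − x`.
Likewise `A(y,x) − x` is preserved by `x ↦ G₁(y) − G₃(y) − x`, and the two involutions agree
exactly when `F₁(y) + G₃(y) = G₁(y) + F₃(y)`. If neither `(x,y)` nor its image lies in the region
`A(x,y) > A(y,x)`, the minimum in `I` is `A(x,y)` at both points, so the condition is needed only
there. The vertical step follows
from the horizontal one by the symmetry `I(x,y) = I(y,x)`.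
-/

namespace Stmt11

variable (a01 a02 a10 a12 a20 a21 a22 : ℝ)

/-- `F₁(y) = max(α₂₀+2y, α₂₁+y, α₂₂)`. -/
noncomputable def F1 (y : ℝ) : ℝ := max (a20 + 2 * y) (max (a21 + y) a22)

/-- `F₃(y) = max(α₀₁+y, α₀₂)`. -/
noncomputable def F3 (y : ℝ) : ℝ := max (a01 + y) a02

/-- `G₁(y) = max(α₀₂+2y, α₁₂+y, α₂₂)`. -/
noncomputable def G1 (y : ℝ) : ℝ := max (a02 + 2 * y) (max (a12 + y) a22)

/-- `G₃(y) = max(α₁₀+y, α₂₀)`. -/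
noncomputable def G3 (y : ℝ) : ℝ := max (a10 + y) a20

/-- The tropical biquadratic polynomial
`A(x,y) = max(α₀₁+y+2x, α₀₂+2x, α₁₀+2y+x, α₁₂+x, α₂₀+2y, α₂₁+y, α₂₂)`
(the coefficients `α₀₀` and `α₁₁` being `-∞`). -/
noncomputable def A (x y : ℝ) : ℝ :=
  max (a01 + y + 2 * x) (max (a02 + 2 * x) (max (a10 + 2 * y + x)
    (max (a12 + x) (max (a20 + 2 * y) (max (a21 + y) a22)))))

/-- The invariant `I(x,y) = min(A(x,y), A(y,x)) − x − y`. -/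
noncomputable def I (x y : ℝ) : ℝ :=
  min (A a01 a02 a10 a12 a20 a21 a22 x y) (A a01 a02 a10 a12 a20 a21 a22 y x) - x - y

theorem min_eq_min_of_lt_imp_eq {α : Type*} [LinearOrder α] {p q q' : α}
    (h : q < p → q' = q) (h' : q' < p → q' = q) : min p q' = min p q := by
  rcases lt_or_ge q p with hq | hq
  · rw [h hq]
  rcases lt_or_ge q' p with hq' | hq'
  · rw [h' hq']
  rw [min_eq_left hq, min_eq_left hq']

def tropQuad (a b c x : ℝ) : ℝ := max (a + 2 * x) (max (b + x) c)

theorem tropQuad_vieta_sub_self (a b c x : ℝ) :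
    tropQuad a b c (c - a - x) - (c - a - x) = tropQuad a b c x - x := by
  simp only [tropQuad, ← max_sub_sub_right]
  ring_nf
  ac_rfl

local notation "𝒜" => A a01 a02 a10 a12 a20 a21 a22
local notation "ℐ" => I a01 a02 a10 a12 a20 a21 a22

theorem A_eq_tropQuad (x y : ℝ) :
    𝒜 x y = tropQuad (F3 a01 a02 y) (max (a10 + 2 * y) a12) (F1 a20 a21 a22 y) x := by
  simp only [A, tropQuad, F3, F1, ← max_add_add_right]
  ring_nf
  ac_rfl

theorem A_swap_eq_tropQuad (x y : ℝ) :
    𝒜 y x = tropQuad (G3 a10 a20 y) (max (a01 + 2 * y) a21) (G1 a02 a12 a22 y) x := by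
  simp only [A, tropQuad, G3, G1, ← max_add_add_right]
  ring_nf
  ac_rfl

theorem A_reflect_sub_self (x y : ℝ) :
    𝒜 (F1 a20 a21 a22 y - F3 a01 a02 y - x) y - (F1 a20 a21 a22 y - F3 a01 a02 y - x) =
      𝒜 x y - x := by
  rw [A_eq_tropQuad, A_eq_tropQuad]
  exact tropQuad_vieta_sub_self _ _ _ _

theorem A_swap_reflect_sub_self {y : ℝ}
    (h : F1 a20 a21 a22 y + G3 a10 a20 y = G1 a02 a12 a22 y + F3 a01 a02 y) (x : ℝ) :
    𝒜 y (F1 a20 a21 a22 y - F3 a01 a02 y - x) - (F1 a20 a21 a22 y - F3 a01 a02 y - x) =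
      𝒜 y x - x := by
  have hreflect : F1 a20 a21 a22 y - F3 a01 a02 y - x = G1 a02 a12 a22 y - G3 a10 a20 y - x := by
    linarith
  rw [hreflect, A_swap_eq_tropQuad, A_swap_eq_tropQuad]
  exact tropQuad_vieta_sub_self _ _ _ _

theorem I_comm (x y : ℝ) : ℐ x y = ℐ y x := by
  rw [I, I, min_comm]
  ring

theorem I_eq_min_sub (x y : ℝ) : ℐ x y = min (𝒜 x y - x) (𝒜 y x - x) - y := by
  rw [I, min_sub_sub_right]

theorem I_reflect
    (hcond : ∀ x y : ℝ, 𝒜 y x < 𝒜 x y →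
      F1 a20 a21 a22 y + G3 a10 a20 y = G1 a02 a12 a22 y + F3 a01 a02 y)
    (x y : ℝ) :
    ℐ (F1 a20 a21 a22 y - F3 a01 a02 y - x) y = ℐ x y := by
  set x' := F1 a20 a21 a22 y - F3 a01 a02 y - x
  rw [I_eq_min_sub, I_eq_min_sub, A_reflect_sub_self]
  congr 1
  apply min_eq_min_of_lt_imp_eq
  · intro hlt
    exact A_swap_reflect_sub_self _ _ _ _ _ _ _ (hcond x y (by linarith)) x
  · intro hlt
    rw [← A_reflect_sub_self] at hlt
    exact A_swap_reflect_sub_self _ _ _ _ _ _ _ (hcond x' y (by linarith)) x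

theorem integrability_of_pair_of_pencils
    (hcond : ∀ x y : ℝ,
      A a01 a02 a10 a12 a20 a21 a22 y x < A a01 a02 a10 a12 a20 a21 a22 x y →
      F1 a20 a21 a22 y + G3 a10 a20 y = G1 a02 a12 a22 y + F3 a01 a02 y) :
    ∀ x y : ℝ,
      I a01 a02 a10 a12 a20 a21 a22 (F1 a20 a21 a22 y - F3 a01 a02 y - x) y =
        I a01 a02 a10 a12 a20 a21 a22 x y ∧
      I a01 a02 a10 a12 a20 a21 a22 (F1 a20 a21 a22 y - F3 a01 a02 y - x)
          (F1 a20 a21 a22 (F1 a20 a21 a22 y - F3 a01 a02 y - x) -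
            F3 a01 a02 (F1 a20 a21 a22 y - F3 a01 a02 y - x) - y) =
        I a01 a02 a10 a12 a20 a21 a22 x y := by
  intro x y
  have horizontal := I_reflect a01 a02 a10 a12 a20 a21 a22 hcond x y
  refine ⟨horizontal, ?_⟩
  rw [I_comm, I_reflect a01 a02 a10 a12 a20 a21 a22 hcond, I_comm, horizontal]

end Stmt11
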